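/- Let $T$ be a directed tree rooted at $r$ with edges oriented away from the root, $S$ a set of vertices of $T$, and let $\hat{f} : E(T) \to \mathbb{R}_{\ge 0}$ and $g : E(T) \to \mathbb{R}_{\ge 0}$ be edge functions such that for every cut $U \subseteq V(T)$ with $r \in U$ and $S \cap U = \emptyset$ one has $\sum_{\hat{e} \in \delta^{out}(U)} \hat{f}(\hat{e}) \ge 2$, and suppose that for all $\hat{e}$: $\hat{f}(\hat{e}) - g(\hat{e}) \le x(\hat{e}) - y(\hat{e})$ where $x, y, g$ satisfy $\sum_{\hat{e} \in E(T)} g(\hat{e}) \le 1$ and $\sum_{\hat{e} \in E(T)} y(\hat{e}) \le \beta$, and call an edge $\hat{e}$ 'bad' if $x(\hat{e}) - y(\hat{e}) < \frac{1}{2\beta} y(\hat{e})$. Then for every cut $U$ separating $r$ from $S$: $\sum_{\hat{e} \in \delta^{out}(U), \hat{e} \text{ good}} (x(\hat{e}) - y(\hat{e})) \ge \frac{1}{2}$. -/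

import Mathlib

/-!
On a cut `U` separating `r` from `S`, the residual capacities `x - y` sum to at least
`2 - 1 = 1`, because `f` carries at least `2` across the cut and `g` at most `1` in total.
A bad edge has `x - y < y / (2β)`, so the bad edges of the cut carry less than
`(∑ y) / (2β) ≤ 1/2` of that; the good edges carry the rest.
-/

open Finset

section CutSums

variable {ι : Type*} (s : Finset ι)

theorem sub_le_sum_of_sub_le {f g h : ι → ℝ} {a b : ℝ} (hfgh : ∀ i ∈ s, f i - g i ≤ h i)
    (ha : a ≤ ∑ i ∈ s, f i) (hb : ∑ i ∈ s, g i ≤ b) : a - b ≤ ∑ i ∈ s, h i :=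
  calc a - b ≤ ∑ i ∈ s, f i - ∑ i ∈ s, g i := sub_le_sub ha hb
    _ = ∑ i ∈ s, (f i - g i) := (sum_sub_distrib f g).symm
    _ ≤ ∑ i ∈ s, h i := sum_le_sum hfgh

theorem sum_filter_lt_mul_le_mul_sum (h y : ι → ℝ) {c : ℝ} (hc : 0 ≤ c)
    (hy : ∀ i ∈ s, 0 ≤ y i) :
    ∑ i ∈ s.filter (fun i => h i < c * y i), h i ≤ c * ∑ i ∈ s, y i :=
  calc ∑ i ∈ s.filter (fun i => h i < c * y i), h i
      ≤ ∑ i ∈ s.filter (fun i => h i < c * y i), c * y i :=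
        sum_le_sum fun _ hi => (mem_filter.1 hi).2.le
    _ ≤ ∑ i ∈ s, c * y i :=
        sum_le_sum_of_subset_of_nonneg (filter_subset _ _)
          fun i hi _ => mul_nonneg hc (hy i hi)
    _ = c * ∑ i ∈ s, y i := (mul_sum _ _ _).symm

end CutSums

open Classical in
theorem stmt_11_general {V : Type*} [DecidableEq V]
    (ET : Finset (V × V)) (r : V) (S : Set V)
    (f g x y : V × V → ℝ) (β : ℝ) (hβ : 0 < β)
    (hg0 : ∀ e, 0 ≤ g e)
    (hy0 : ∀ e, 0 ≤ y e)
    (hflow : ∀ U : Finset V, r ∈ U → (∀ s ∈ S, s ∉ U) →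
      2 ≤ ∑ e ∈ ET.filter (fun e => e.1 ∈ U ∧ e.2 ∉ U), f e)
    (hfg : ∀ e ∈ ET, f e - g e ≤ x e - y e)
    (hgsum : ∑ e ∈ ET, g e ≤ 1)
    (hysum : ∑ e ∈ ET, y e ≤ β) :
    ∀ U : Finset V, r ∈ U → (∀ s ∈ S, s ∉ U) →
      1 / 2 ≤
        ∑ e ∈ ET.filter
            (fun e => e.1 ∈ U ∧ e.2 ∉ U ∧ ¬(x e - y e < (1 / (2 * β)) * y e)),
          (x e - y e) := by
  intro U hrU hSU
  set cut := ET.filter (fun e => e.1 ∈ U ∧ e.2 ∉ U)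
  have hcut : 2 - 1 ≤ ∑ e ∈ cut, (x e - y e) :=
    sub_le_sum_of_sub_le cut (fun e he => hfg e (mem_filter.1 he).1) (hflow U hrU hSU)
      ((sum_le_sum_of_subset_of_nonneg (filter_subset _ _) fun e _ _ => hg0 e).trans hgsum)
  have hbad : ∑ e ∈ cut.filter (fun e => x e - y e < (1 / (2 * β)) * y e), (x e - y e)
      ≤ 1 / 2 :=
    calc _ ≤ 1 / (2 * β) * ∑ e ∈ cut, y e :=
          sum_filter_lt_mul_le_mul_sum cut _ y (by positivity) fun e _ => hy0 e
      _ ≤ 1 / (2 * β) * β := by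
          gcongr
          exact (sum_le_sum_of_subset_of_nonneg (filter_subset _ _) fun e _ _ => hy0 e).trans
            hysum
      _ = 1 / 2 := by field_simp
  have hgood : ET.filter (fun e => e.1 ∈ U ∧ e.2 ∉ U ∧ ¬(x e - y e < (1 / (2 * β)) * y e))
      = cut.filter (fun e => ¬(x e - y e < (1 / (2 * β)) * y e)) := by
    rw [filter_filter]
    simp only [and_assoc]
  rw [hgood]
  rw [← sum_filter_add_sum_filter_not cut (fun e => x e - y e < (1 / (2 * β)) * y e)] at hcut
  linarith

open Classical in
/-- Abstract form of the flow-on-good-paths lemma: if every cut `U` separating the root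
`r` from `S` carries `f`-flow at least `2`, `f - g ≤ x - y` edgewise,
`∑ g ≤ 1` and `∑ y ≤ β`, then after discarding the `bad` edges (those with
`x e - y e < y e / (2β)`) every such cut still has residual capacity
`∑ (x e - y e)` at least `1/2`. -/
theorem stmt_11 {V : Type*} [Fintype V] [DecidableEq V]
    (ET : Finset (V × V)) (r : V) (S : Set V)
    (f g x y : V × V → ℝ) (β : ℝ) (hβ : 0 < β)
    (hf0 : ∀ e, 0 ≤ f e) (hg0 : ∀ e, 0 ≤ g e)
    (hx0 : ∀ e, 0 ≤ x e) (hy0 : ∀ e, 0 ≤ y e)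
    (hflow : ∀ U : Finset V, r ∈ U → (∀ s ∈ S, s ∉ U) →
      2 ≤ ∑ e ∈ ET.filter (fun e => e.1 ∈ U ∧ e.2 ∉ U), f e)
    (hfg : ∀ e ∈ ET, f e - g e ≤ x e - y e)
    (hgsum : ∑ e ∈ ET, g e ≤ 1)
    (hysum : ∑ e ∈ ET, y e ≤ β) :
    ∀ U : Finset V, r ∈ U → (∀ s ∈ S, s ∉ U) →
      1 / 2 ≤
        ∑ e ∈ ET.filter
            (fun e => e.1 ∈ U ∧ e.2 ∉ U ∧ ¬(x e - y e < (1 / (2 * β)) * y e)),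
          (x e - y e) :=
  stmt_11_general ET r S f g x y β hβ hg0 hy0 hflow hfg hgsum hysum
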